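/- arXiv:2306.09038 — 4 statements merged into one kernel-verified Lean document; each statement's English description precedes it below -/
import Mathlib

section
/- Let α ≥ 0 be fixed and let f : (0,∞) → ℂ be measurable with f(t) t^{-α} bounded on (0,∞). Then for any fixed β > 0 there is a constant C such that for all m, y > 0: |∫₀^{m/2} e^{-t} t^{m-1} f(yt) dt| + |∫_{2m}^∞ e^{-t} t^{m-1} f(yt) dt| ≤ C · y^α (m+1)^{-β} Γ(m+α). -/
/-!
On `(0, m/2]` we have `e^{-t} ≤ e^{m/2} e^{-2t}`, and on `[2m, ∞)` we have
`e^{-t} ≤ e^{-m} e^{-t/2}`. Together with `‖f(yt)‖ ≤ c y^α t^α`, each tail is bounded by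
`c y^α` times a rescaled Gamma integral `∫₀^∞ t^{m+α-1} e^{-rt} dt = r^{-(m+α)} Γ(m+α)`.
This leaves the factors `e^{m/2} 2^{-(m+α)}` and `e^{-m} 2^{m+α}`. Both decay exponentially in `m`
because `1/2 < log 2 < 1`, and exponential decay beats every power `(m+1)^{-β}`.
-/

open MeasureTheory Set Real

theorem rpow_mul_exp_neg_mul_le {a β x : ℝ} (ha : 0 < a) (hβ : 0 < β) (hx : 0 ≤ x) :
    x ^ β * exp (-(a * x)) ≤ (β / a) ^ β * exp (-β) := by
  set u := a * x / β with hu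
  have hu0 : 0 ≤ u := by positivity
  have hx_eq : x = β / a * u := by rw [hu]; field_simp
  have hax : -(a * x) = -u * β := by rw [hu]; field_simp
  calc x ^ β * exp (-(a * x)) = (β / a) ^ β * (u * exp (-u)) ^ β := by
        rw [mul_rpow hu0 (exp_pos _).le, ← exp_mul, ← hax, hx_eq, mul_rpow (by positivity) hu0]
        ring
    _ ≤ (β / a) ^ β * exp (-1) ^ β := by
        gcongr
        exact mul_exp_neg_le_exp_neg_one u
    _ = (β / a) ^ β * exp (-β) := by rw [← exp_mul]; ring_nf

theorem exists_exp_neg_mul_le_mul_rpow_neg {a β : ℝ} (ha : 0 < a) (hβ : 0 < β) :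
    ∃ K, ∀ m, 0 ≤ m → exp (-(a * m)) ≤ K * (m + 1) ^ (-β) := by
  refine ⟨exp a * ((β / a) ^ β * exp (-β)), fun m hm => ?_⟩
  have hm1 : 0 < m + 1 := by linarith
  have hdecay := rpow_mul_exp_neg_mul_le ha hβ hm1.le
  rw [rpow_neg hm1.le, ← div_eq_mul_inv, le_div_iff₀ (by positivity)]
  calc exp (-(a * m)) * (m + 1) ^ β = exp a * ((m + 1) ^ β * exp (-(a * (m + 1)))) := by
        rw [mul_left_comm, ← exp_add]; ring_nf
    _ ≤ _ := by gcongr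

theorem norm_setIntegral_le_mul_Gamma {E : Type*} [NormedAddCommGroup E] [NormedSpace ℝ E]
    {S : Set ℝ} (hS : MeasurableSet S) (hS0 : S ⊆ Ioi 0) {F : ℝ → E} {A a r : ℝ}
    (hA : 0 ≤ A) (ha : 0 < a) (hr : 0 < r)
    (hF : ∀ t ∈ S, ‖F t‖ ≤ A * (t ^ (a - 1) * exp (-(r * t)))) :
    ‖∫ t in S, F t‖ ≤ A * ((1 / r) ^ a * Gamma a) := by
  have hint : IntegrableOn (fun t => A * (t ^ (a - 1) * exp (-(r * t)))) (Ioi 0) :=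
    Integrable.const_mul (.of_integral_ne_zero <| by
      rw [integral_rpow_mul_exp_neg_mul_Ioi ha hr]; positivity) A
  calc ‖∫ t in S, F t‖ ≤ ∫ t in S, A * (t ^ (a - 1) * exp (-(r * t))) :=
        norm_integral_le_of_norm_le (hint.mono_set hS0)
          ((ae_restrict_iff' hS).2 (ae_of_all _ hF))
    _ ≤ ∫ t in Ioi 0, A * (t ^ (a - 1) * exp (-(r * t))) :=
        setIntegral_mono_set hint
          ((ae_restrict_iff' measurableSet_Ioi).2 (ae_of_all _ fun t (ht : 0 < t) => by positivity))
          hS0.eventuallyLE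
    _ = A * ((1 / r) ^ a * Gamma a) := by
        rw [integral_const_mul, integral_rpow_mul_exp_neg_mul_Ioi ha hr]

theorem norm_setIntegral_gammaWeight_le {α c y m k r : ℝ} {f : ℝ → ℂ} (hy : 0 < y)
    (hf : ∀ t, 0 < t → ‖f t‖ ≤ c * t ^ α) (hmα : 0 < m + α) {S : Set ℝ}
    (hS : MeasurableSet S) (hS0 : S ⊆ Ioi 0) (hr : 0 < r) (hk : ∀ t ∈ S, -t ≤ k - r * t) :
    ‖∫ t in S, ((exp (-t) * t ^ (m - 1) : ℝ) : ℂ) * f (y * t)‖ ≤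
      c * y ^ α * exp k * ((1 / r) ^ (m + α) * Gamma (m + α)) := by
  have hc : 0 ≤ c := by simpa using (norm_nonneg _).trans (hf 1 one_pos)
  refine norm_setIntegral_le_mul_Gamma hS hS0 (by positivity) hmα hr fun t ht => ?_
  have ht0 : 0 < t := hS0 ht
  calc ‖((exp (-t) * t ^ (m - 1) : ℝ) : ℂ) * f (y * t)‖
      ≤ exp (-t) * t ^ (m - 1) * (c * (y * t) ^ α) := by
        rw [norm_mul, Complex.norm_real, norm_of_nonneg (by positivity)]
        gcongr
        exact hf _ (by positivity)
    _ = c * y ^ α * (t ^ (m + α - 1) * exp (-t)) := by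
        rw [mul_rpow hy.le ht0.le, add_sub_right_comm, rpow_add ht0]
        ring
    _ ≤ c * y ^ α * (t ^ (m + α - 1) * (exp k * exp (-(r * t)))) := by
        rw [← exp_add]; gcongr; linarith [hk t ht]
    _ = c * y ^ α * exp k * (t ^ (m + α - 1) * exp (-(r * t))) := by ring

theorem exp_half_mul_half_rpow_le {m α : ℝ} (hα : 0 ≤ α) :
    exp (m / 2) * (1 / 2) ^ (m + α) ≤ exp (-((log 2 - 1 / 2) * m)) := by
  rw [rpow_def_of_pos (by norm_num), ← exp_add, exp_le_exp, one_div, log_inv]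
  nlinarith [log_pos one_lt_two]

theorem exp_neg_mul_two_rpow {m α : ℝ} :
    exp (-m) * (1 / 2⁻¹) ^ (m + α) = 2 ^ α * exp (-((1 - log 2) * m)) := by
  rw [one_div, inv_inv, rpow_add two_pos, rpow_def_of_pos two_pos m]
  rw [mul_comm ((2:ℝ) ^ α), ← mul_assoc, ← exp_add]
  ring_nf

theorem gamma_integral_tails_general (α : ℝ) (hα : 0 ≤ α) (f : ℝ → ℂ)
    (hbound : ∃ c : ℝ, ∀ t : ℝ, 0 < t → ‖f t‖ ≤ c * t ^ α)
    (β : ℝ) (hβ : 0 < β) :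
    ∃ C : ℝ, ∀ m y : ℝ, 0 < m → 0 < y →
      ‖∫ t in Ioc (0:ℝ) (m / 2), ((Real.exp (-t) * t ^ (m - 1) : ℝ) : ℂ) * f (y * t)‖ +
        ‖∫ t in Ioi (2 * m), ((Real.exp (-t) * t ^ (m - 1) : ℝ) : ℂ) * f (y * t)‖ ≤
      C * y ^ α * (m + 1) ^ (-β) * Real.Gamma (m + α) := by
  obtain ⟨c, hf⟩ := hbound
  have hc : 0 ≤ c := by simpa using (norm_nonneg _).trans (hf 1 one_pos)
  obtain ⟨K₁, hK₁⟩ := exists_exp_neg_mul_le_mul_rpow_neg (a := log 2 - 1 / 2)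
    (by linarith [log_two_gt_d9]) hβ
  obtain ⟨K₂, hK₂⟩ := exists_exp_neg_mul_le_mul_rpow_neg (a := 1 - log 2)
    (by linarith [log_two_lt_d9]) hβ
  refine ⟨c * (K₁ + 2 ^ α * K₂), fun m y hm hy => ?_⟩
  have hmα : 0 < m + α := by linarith
  have h₁ := norm_setIntegral_gammaWeight_le (S := Ioc 0 (m / 2)) (k := m / 2) hy hf hmα
    measurableSet_Ioc Ioc_subset_Ioi_self two_pos fun t ht => by linarith [ht.2]
  have h₂ := norm_setIntegral_gammaWeight_le (k := -m) hy hf hmα measurableSet_Ioi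
    (Ioi_subset_Ioi (by linarith)) (inv_pos.2 two_pos) fun t (ht : 2 * m < t) => by linarith
  calc _ ≤ c * y ^ α * Gamma (m + α) *
        (exp (m / 2) * (1 / 2) ^ (m + α) + exp (-m) * (1 / 2⁻¹) ^ (m + α)) := by
        linarith
    _ ≤ c * y ^ α * Gamma (m + α) * (K₁ * (m + 1) ^ (-β) + 2 ^ α * (K₂ * (m + 1) ^ (-β))) := by
        gcongr _ * (?_ + ?_)
        · exact exp_half_mul_half_rpow_le hα |>.trans (hK₁ m hm.le)
        · rw [exp_neg_mul_two_rpow]; gcongr; exact hK₂ m hm.le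
    _ = _ := by ring

/-- Tail estimate for Gamma-weighted integrals: if `f(t) t^{-α}` is bounded on `(0,∞)`,
then for any `β > 0` the parts of `∫₀^∞ e^{-t} t^{m-1} f(yt) dt` over `(0, m/2]` and
`[2m, ∞)` are `O(y^α (m+1)^{-β} Γ(m+α))`, uniformly for `m, y > 0`. -/
theorem gamma_integral_tails (α : ℝ) (hα : 0 ≤ α) (f : ℝ → ℂ)
    (hmeas : Measurable f) (hbound : ∃ c : ℝ, ∀ t : ℝ, 0 < t → ‖f t‖ ≤ c * t ^ α)
    (β : ℝ) (hβ : 0 < β) :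
    ∃ C : ℝ, ∀ m y : ℝ, 0 < m → 0 < y →
      ‖∫ t in Ioc (0:ℝ) (m / 2), ((Real.exp (-t) * t ^ (m - 1) : ℝ) : ℂ) * f (y * t)‖ +
        ‖∫ t in Ioi (2 * m), ((Real.exp (-t) * t ^ (m - 1) : ℝ) : ℂ) * f (y * t)‖ ≤
      C * y ^ α * (m + 1) ^ (-β) * Real.Gamma (m + α) :=
  gamma_integral_tails_general α hα f hbound β hβ
end

section
/- For real a, x with 0 < x < a, setting λ = x/a, the lower regularized incomplete gamma function satisfies P(a,x) = ((λ e^{1-λ})^a / √(2πa)) · (1/(1-λ) + O(1/((1-λ)³ a))), where the O-bound is uniform over all 0 < x < a. -/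
/-!
Integrating by parts against the antiderivative `t^a e^{-t} / (a - t)` gives
`∫₀ˣ t^{a-1} e^{-t} dt = x^a e^{-x} / (a - x) - J`, where `J = ∫₀ˣ t^a e^{-t} / (a - t)² dt`
satisfies `0 ≤ J ≤ x / (a - x)² · ∫₀ˣ t^{a-1} e^{-t} dt`. With `λ = x / a`, Stirling's formula
`Γ(a) = a^{a-1/2} e^{-a} √(2π) (1 + O(1/a))` turns `x^a e^{-x} / ((a - x) Γ(a))` into
`(λ e^{1-λ})^a / (√(2πa) (1 - λ)) · (1 + O(1/a))`, while `J / Γ(a)` is `O(λ / ((1 - λ)³ a))` times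
`(λ e^{1-λ})^a / √(2πa)`; both errors are `O(1 / ((1 - λ)³ a))` times that scale.
Stirling's formula for real `a` follows from Robbins' bound for `n!` because `log Γ` is convex and
satisfies `log Γ(y + 1) = log Γ(y) + log y`, which pins it between chords on `[n, n + 1]`.
For bounded `a` the Chernoff bound `P(a, x) ≤ (λ e^{1-λ})^a` is enough.
-/

open MeasureTheory Set Real Filter Topology

namespace Stirling

theorem log_stirlingSeq_le_log_sqrt_pi_add {n : ℕ} (hn : n ≠ 0) :
    log (stirlingSeq n) ≤ log √π + 1 / (12 * n) := by
  -- Robbins' bound makes `log (stirlingSeq k) - 1 / (12 k)` increasing; its limit is `log √π`.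
  set f : ℕ → ℝ := fun k => log (stirlingSeq (k + 1)) - 1 / ((k : ℝ) + 1) / 12
  have hf_mono : Monotone f := monotone_nat_of_le_succ fun k => by
    have := log_stirlingSeq_sdiff_le (k + 1)
    simp only [f]
    push_cast at this ⊢
    have h : 1 / (12 * ((k : ℝ) + 1) * ((k : ℝ) + 1 + 1))
        = 1 / ((k : ℝ) + 1) / 12 - 1 / ((k : ℝ) + 1 + 1) / 12 := by
      field_simp; ring
    linarith
  have hf_lim : Tendsto f atTop (𝓝 (log √π - 0 / 12)) :=
    ((tendsto_stirlingSeq_sqrt_pi.comp (tendsto_add_atTop_nat 1)).log (by positivity)).sub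
      (tendsto_one_div_add_atTop_nhds_zero_nat.div_const 12)
  obtain ⟨m, rfl⟩ := Nat.exists_eq_succ_of_ne_zero hn
  have := hf_mono.ge_of_tendsto hf_lim m
  simp only [f] at this
  push_cast
  have h : 1 / ((m : ℝ) + 1) / 12 = 1 / (12 * ((m : ℝ) + 1)) := by rw [div_div, mul_comm]
  linarith

end Stirling

theorem Real.log_Gamma_add_one {y : ℝ} (hy : 0 < y) :
    log (Gamma (y + 1)) = log (Gamma y) + log y := by
  rw [Gamma_add_one hy.ne', log_mul hy.ne' (Gamma_pos_of_pos hy).ne', add_comm]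

noncomputable def logStirling (y : ℝ) : ℝ := (y - 1 / 2) * log y - y + log √(2 * π)

theorem hasDerivAt_logStirling {y : ℝ} (hy : 0 < y) :
    HasDerivAt logStirling (log y - 1 / (2 * y)) y := by
  have h := ((((hasDerivAt_id y).sub_const (1 / 2)).mul (hasDerivAt_log hy.ne')).sub
    (hasDerivAt_id y)).add_const (log √(2 * π))
  refine h.congr_deriv ?_
  simp only [id]
  field_simp
  ring

theorem log_Gamma_natCast_sub_logStirling {n : ℕ} (hn : n ≠ 0) :
    log (Gamma n) - logStirling n = log (Stirling.stirlingSeq n) - log √π := by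
  obtain ⟨m, rfl⟩ := Nat.exists_eq_succ_of_ne_zero hn
  have hm : (0 : ℝ) < m + 1 := by positivity
  rw [Stirling.log_stirlingSeq_formula, Nat.cast_succ, Gamma_nat_eq_factorial, Nat.factorial_succ,
    Nat.cast_mul, log_mul (by positivity) (by positivity), log_mul two_ne_zero hm.ne',
    log_div hm.ne' (exp_ne_zero 1), log_exp, log_sqrt pi_pos.le]
  unfold logStirling
  rw [log_sqrt (by positivity), log_mul two_ne_zero pi_ne_zero]
  push_cast
  ring

theorem logStirling_sub_le {b c : ℝ} (hb : 0 < b) (hbc : b ≤ c) :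
    logStirling c - logStirling b ≤ log c * (c - b) := by
  have hderiv : ∀ y ∈ Icc b c, HasDerivAt logStirling (log y - 1 / (2 * y)) y :=
    fun y hy => hasDerivAt_logStirling (hb.trans_le hy.1)
  refine (convex_Icc b c).image_sub_le_mul_sub_of_deriv_le
    (fun y hy => (hderiv y hy).continuousAt.continuousWithinAt)
    (fun y hy => (hderiv y (interior_subset hy)).differentiableAt.differentiableWithinAt)
    (fun y hy => ?_) b (left_mem_Icc.2 hbc) c (right_mem_Icc.2 hbc) hbc
  rw [interior_Icc] at hy
  have hy0 : 0 < y := hb.trans hy.1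
  rw [(hderiv y (Ioo_subset_Icc_self hy)).deriv]
  have : 0 < 1 / (2 * y) := by positivity
  linarith [log_le_log hy0 hy.2.le]

theorem le_logStirling_sub {b c : ℝ} (hb : 0 < b) (hbc : b ≤ c) :
    (log b - 1 / (2 * b)) * (c - b) ≤ logStirling c - logStirling b := by
  have hderiv : ∀ y ∈ Icc b c, HasDerivAt logStirling (log y - 1 / (2 * y)) y :=
    fun y hy => hasDerivAt_logStirling (hb.trans_le hy.1)
  refine (convex_Icc b c).mul_sub_le_image_sub_of_le_deriv
    (fun y hy => (hderiv y hy).continuousAt.continuousWithinAt)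
    (fun y hy => (hderiv y (interior_subset hy)).differentiableAt.differentiableWithinAt)
    (fun y hy => ?_) b (left_mem_Icc.2 hbc) c (right_mem_Icc.2 hbc) hbc
  rw [interior_Icc] at hy
  rw [(hderiv y (Ioo_subset_Icc_self hy)).deriv]
  have : 1 / (2 * y) ≤ 1 / (2 * b) := by gcongr; exact hy.1.le
  linarith [log_le_log hb hy.1.le]

theorem abs_log_Gamma_natCast_add_sub_logStirling_le {n : ℕ} (hn : 2 ≤ n) {s : ℝ}
    (hs0 : 0 < s) (hs1 : s ≤ 1) : |log (Gamma (n + s)) - logStirling (n + s)| ≤ 2 / (n - 1) := by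
  have hn0 : n ≠ 0 := by omega
  have hn2 : (2 : ℝ) ≤ n := by exact_mod_cast hn
  have hfeq : ∀ {y : ℝ}, 0 < y → (log ∘ Gamma) (y + 1) = (log ∘ Gamma) y + log y :=
    fun hy => log_Gamma_add_one hy
  have hΓ_le : log (Gamma (n + s)) ≤ log (Gamma n) + s * log n :=
    BohrMollerup.f_add_nat_le convexOn_log_Gamma hfeq hn0 hs0 hs1
  have hΓ_ge : log (Gamma n) + s * log (n - 1) ≤ log (Gamma (n + s)) :=
    BohrMollerup.f_add_nat_ge convexOn_log_Gamma hfeq hn hs0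
  have hS_le := logStirling_sub_le (b := n) (c := n + s) (by positivity) (by linarith)
  have hS_ge := le_logStirling_sub (b := n) (c := n + s) (by positivity) (by linarith)
  have hμ := log_Gamma_natCast_sub_logStirling hn0
  have hμ_ge : log √π ≤ log (Stirling.stirlingSeq n) :=
    log_le_log (by positivity) (Stirling.sqrt_pi_le_stirlingSeq hn0)
  have hμ_le := Stirling.log_stirlingSeq_le_log_sqrt_pi_add hn0
  have hlog : log (n + s) - log (n - 1) ≤ 2 / (n - 1) := by
    have hn1 : (0 : ℝ) < n - 1 := by linarith
    rw [← log_div (by positivity) hn1.ne']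
    calc log ((n + s) / (n - 1)) ≤ (n + s) / (n - 1) - 1 :=
          log_le_sub_one_of_pos (div_pos (by positivity) hn1)
      _ = (s + 1) / (n - 1) := by field_simp; ring
      _ ≤ 2 / (n - 1) := div_le_div_of_nonneg_right (by linarith) hn1.le
  rw [abs_le]
  constructor
  · have : s * (log (n + s) - log (n - 1)) ≤ 1 * (2 / (n - 1)) :=
      mul_le_mul hs1 hlog (sub_nonneg.2 (log_le_log (by linarith) (by linarith))) zero_le_one
    nlinarith
  · have h12 : 1 / (12 * (n : ℝ)) + 1 / (2 * n) ≤ 2 / (n - 1) := by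
      rw [div_add_div _ _ (by positivity) (by positivity),
        div_le_div_iff₀ (by positivity) (by linarith)]
      nlinarith
    have : s * (1 / (2 * n)) ≤ 1 / (2 * n) := mul_le_of_le_one_left (by positivity) hs1
    nlinarith

theorem abs_log_Gamma_sub_logStirling_le {a : ℝ} (ha : 2 < a) :
    |log (Gamma a) - logStirling a| ≤ 6 / a := by
  set n := ⌈a - 1⌉₊
  have hn : 2 ≤ n := Nat.lt_ceil.2 (by push_cast; linarith)
  have hna : (n : ℝ) < a := by linarith [Nat.ceil_lt_add_one (by linarith : 0 ≤ a - 1)]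
  have han : a ≤ n + 1 := by linarith [Nat.le_ceil (a - 1)]
  have h := abs_log_Gamma_natCast_add_sub_logStirling_le hn (s := a - n) (by linarith) (by linarith)
  rw [add_sub_cancel] at h
  refine h.trans ?_
  have hn2 : (2 : ℝ) ≤ n := by exact_mod_cast hn
  rw [div_le_div_iff₀ (by linarith) (by linarith)]
  linarith

theorem exp_logStirling_mul_self {a : ℝ} (ha : 0 < a) :
    exp (logStirling a) * a = a ^ a * exp (-a) * √(2 * π * a) := by
  have hpow : exp ((a - 1 / 2) * log a) * a = a ^ a * √a := by
    rw [mul_comm (a - 1 / 2), ← rpow_def_of_pos ha, ← rpow_add_one ha.ne', sqrt_eq_rpow,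
      ← rpow_add ha]
    ring_nf
  calc exp (logStirling a) * a = exp ((a - 1 / 2) * log a) * a * exp (-a) * √(2 * π) := by
        rw [logStirling, exp_add, exp_sub, exp_log (by positivity), exp_neg]; ring
    _ = a ^ a * exp (-a) * √(2 * π * a) := by rw [hpow, sqrt_mul (by positivity) a]; ring

theorem abs_exp_logStirling_div_Gamma_sub_one_le {a : ℝ} (ha : 6 ≤ a) :
    |exp (logStirling a) / Gamma a - 1| ≤ 12 / a := by
  have ha0 : 0 < a := by linarith
  have hμ := abs_log_Gamma_sub_logStirling_le (by linarith : 2 < a)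
  rw [abs_sub_comm] at hμ
  have hμ1 : |logStirling a - log (Gamma a)| ≤ 1 :=
    hμ.trans ((div_le_one ha0).2 (by linarith))
  rw [← exp_log (Gamma_pos_of_pos ha0), ← exp_sub]
  calc |exp (logStirling a - log (Gamma a)) - 1| ≤ 2 * |logStirling a - log (Gamma a)| :=
        abs_exp_sub_one_le hμ1
    _ ≤ 2 * (6 / a) := by gcongr
    _ = 12 / a := by ring

theorem integrableOn_rpow_mul_exp_neg_mul {a r : ℝ} (ha : 0 < a) (hr : 0 < r) :
    IntegrableOn (fun t : ℝ => t ^ (a - 1) * exp (-(r * t))) (Ioi 0) := by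
  refine (integrableOn_rpow_mul_exp_neg_mul_rpow (s := a - 1) (by linarith) one_pos hr).congr_fun
    (fun t _ => ?_) measurableSet_Ioi
  simp only [rpow_one, neg_mul]

theorem integrableOn_rpow_mul_exp_neg {a : ℝ} (ha : 0 < a) :
    IntegrableOn (fun t : ℝ => t ^ (a - 1) * exp (-t)) (Ioi 0) := by
  simpa using integrableOn_rpow_mul_exp_neg_mul ha one_pos

theorem mul_exp_one_sub_rpow {a l : ℝ} (hl : 0 ≤ l) :
    (l * exp (1 - l)) ^ a = l ^ a * exp (a * (1 - l)) := by
  rw [mul_rpow hl (exp_pos _).le, ← exp_mul, mul_comm (1 - l)]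

theorem integral_rpow_mul_exp_neg_le_Gamma_mul {a x : ℝ} (hx : 0 < x) (hxa : x ≤ a) :
    ∫ t in Ioc 0 x, t ^ (a - 1) * exp (-t) ≤ Gamma a * ((x / a) * exp (1 - x / a)) ^ a := by
  have ha : 0 < a := hx.trans_le hxa
  set r := a / x with hr_def
  have hr : 1 ≤ r := (one_le_div hx).2 hxa
  have hg : IntegrableOn (fun t : ℝ => exp (a - x) * (t ^ (a - 1) * exp (-(r * t)))) (Ioi 0) :=
    (integrableOn_rpow_mul_exp_neg_mul ha (by linarith)).const_mul _
  -- `e^{-t} ≤ e^{a-x} e^{-rt}` on `(0, x]`, since `(r - 1) t ≤ (r - 1) x = a - x`.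
  have hpt : ∀ t ∈ Ioc (0 : ℝ) x,
      t ^ (a - 1) * exp (-t) ≤ exp (a - x) * (t ^ (a - 1) * exp (-(r * t))) := by
    intro t ht
    have hrx : (r - 1) * x = a - x := by rw [hr_def]; field_simp
    have hrt : (r - 1) * t ≤ (r - 1) * x := mul_le_mul_of_nonneg_left ht.2 (by linarith)
    have hexp : exp (-t) ≤ exp (a - x) * exp (-(r * t)) := by
      rw [← exp_add]; exact exp_le_exp.2 (by linarith)
    rw [mul_left_comm]
    exact mul_le_mul_of_nonneg_left hexp (rpow_nonneg ht.1.le _)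
  calc ∫ t in Ioc 0 x, t ^ (a - 1) * exp (-t)
      ≤ ∫ t in Ioc 0 x, exp (a - x) * (t ^ (a - 1) * exp (-(r * t))) :=
        setIntegral_mono_on ((integrableOn_rpow_mul_exp_neg ha).mono_set Ioc_subset_Ioi_self)
          (hg.mono_set Ioc_subset_Ioi_self) measurableSet_Ioc hpt
    _ ≤ ∫ t in Ioi 0, exp (a - x) * (t ^ (a - 1) * exp (-(r * t))) :=
        setIntegral_mono_set hg ((ae_restrict_iff' measurableSet_Ioi).2 (Eventually.of_forall
          fun t (ht : 0 < t) => by positivity)) Ioc_subset_Ioi_self.eventuallyLE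
    _ = Gamma a * ((x / a) * exp (1 - x / a)) ^ a := by
        rw [integral_const_mul, integral_rpow_mul_exp_neg_mul_Ioi ha (by linarith), hr_def,
          one_div_div, mul_exp_one_sub_rpow (by positivity), mul_one_sub, mul_div_cancel₀ x ha.ne']
        ring

theorem continuousOn_rpow_mul_exp_neg_div_sq {a x : ℝ} (ha : 0 ≤ a) (hxa : x < a) :
    ContinuousOn (fun t : ℝ => t ^ a * exp (-t) / (a - t) ^ 2) (Iic x) :=
  ((continuous_rpow_const ha).mul (continuous_exp.comp continuous_neg)).continuousOn.div
    (by fun_prop) fun t ht => pow_ne_zero 2 (sub_ne_zero.2 (ht.trans_lt hxa).ne')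

theorem integral_rpow_mul_exp_neg_eq_sub {a x : ℝ} (hx : 0 < x) (hxa : x < a) :
    ∫ t in Ioc 0 x, t ^ (a - 1) * exp (-t) =
      x ^ a * exp (-x) / (a - x) - ∫ t in Ioc 0 x, t ^ a * exp (-t) / (a - t) ^ 2 := by
  have ha : 0 < a := hx.trans hxa
  have hJ := continuousOn_rpow_mul_exp_neg_div_sq ha.le hxa
  have hI : IntervalIntegrable (fun t : ℝ => t ^ (a - 1) * exp (-t)) volume 0 x :=
    (intervalIntegrable_iff_integrableOn_Ioc_of_le hx.le).2
      ((integrableOn_rpow_mul_exp_neg ha).mono_set Ioc_subset_Ioi_self)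
  have hJ' : IntervalIntegrable (fun t : ℝ => t ^ a * exp (-t) / (a - t) ^ 2) volume 0 x :=
    (hJ.mono Icc_subset_Iic_self).intervalIntegrable_of_Icc hx.le
  have hderiv : ∀ t ∈ Ioo 0 x, HasDerivAt (fun t => t ^ a * exp (-t) / (a - t))
      (t ^ (a - 1) * exp (-t) + t ^ a * exp (-t) / (a - t) ^ 2) t := by
    intro t ht
    have hat : a - t ≠ 0 := by linarith [ht.2]
    refine (((hasDerivAt_rpow_const (Or.inl ht.1.ne')).mul (hasDerivAt_neg t).exp).div
      ((hasDerivAt_id t).const_sub a) hat).congr_deriv ?_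
    simp only [Pi.mul_apply, id]
    rw [show t ^ a = t * t ^ (a - 1) by rw [← rpow_one_add' ht.1.le (by linarith)]; ring_nf]
    field_simp
    ring
  have hcont : ContinuousOn (fun t => t ^ a * exp (-t) / (a - t)) (Icc 0 x) :=
    ((continuous_rpow_const ha.le).mul (continuous_exp.comp continuous_neg)).continuousOn.div
      (by fun_prop) fun t ht => sub_ne_zero.2 (ht.2.trans_lt hxa).ne'
  have hftc := intervalIntegral.integral_eq_sub_of_hasDerivAt_of_le hx.le hcont hderiv (hI.add hJ')
  rw [intervalIntegral.integral_add hI hJ', intervalIntegral.integral_of_le hx.le,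
    intervalIntegral.integral_of_le hx.le, zero_rpow ha.ne', zero_mul, zero_div, sub_zero] at hftc
  linarith

theorem abs_integral_rpow_mul_exp_neg_sub_le {a x : ℝ} (hx : 0 < x) (hxa : x < a) :
    |(∫ t in Ioc 0 x, t ^ (a - 1) * exp (-t)) - x ^ a * exp (-x) / (a - x)| ≤
      x / (a - x) ^ 2 * (x ^ a * exp (-x) / (a - x)) := by
  have ha : 0 < a := hx.trans hxa
  have hIJ := integral_rpow_mul_exp_neg_eq_sub hx hxa
  have hJ_nonneg : 0 ≤ ∫ t in Ioc 0 x, t ^ a * exp (-t) / (a - t) ^ 2 :=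
    setIntegral_nonneg measurableSet_Ioc fun t ht => by have := ht.1; positivity
  -- `t ^ a ≤ x t ^ (a - 1)` and `(a - x)² ≤ (a - t)²` on `(0, x]`.
  have hJ_le : ∫ t in Ioc 0 x, t ^ a * exp (-t) / (a - t) ^ 2 ≤
      x / (a - x) ^ 2 * ∫ t in Ioc 0 x, t ^ (a - 1) * exp (-t) := by
    rw [← integral_const_mul]
    refine setIntegral_mono_on
      (((continuousOn_rpow_mul_exp_neg_div_sq ha.le hxa).mono Icc_subset_Iic_self).integrableOn_Icc
        |>.mono_set Ioc_subset_Icc_self)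
      (((integrableOn_rpow_mul_exp_neg ha).mono_set Ioc_subset_Ioi_self).const_mul _)
      measurableSet_Ioc fun t ht => ?_
    have ht0 := ht.1
    have hpow : t ^ a = t * t ^ (a - 1) := by rw [← rpow_one_add' ht0.le (by linarith)]; ring_nf
    rw [hpow, div_mul_eq_mul_div, mul_assoc]
    gcongr
    · linarith [ht.2]
    · exact ht.2
  rw [hIJ, sub_sub_cancel_left, abs_neg, abs_of_nonneg hJ_nonneg]
  exact hJ_le.trans (mul_le_mul_of_nonneg_left (by linarith) (by positivity))

theorem rpow_mul_exp_neg_div_sub_div_Gamma {a l : ℝ} (ha : 0 < a) (hl : 0 ≤ l) (hl1 : l < 1) :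
    (a * l) ^ a * exp (-(a * l)) / (a - a * l) / Gamma a =
      exp (logStirling a) / Gamma a * ((l * exp (1 - l)) ^ a / (√(2 * π * a) * (1 - l))) := by
  have hS0 : 0 < √(2 * π * a) := by positivity
  have hL : 0 < 1 - l := by linarith
  have hS : exp (logStirling a) = a ^ a * exp (-a) * √(2 * π * a) / a := by
    rw [← exp_logStirling_mul_self ha]; field_simp
  rw [hS, mul_exp_one_sub_rpow hl, mul_rpow ha.le hl, show -(a * l) = a * (1 - l) + -a by ring,
    exp_add, show a - a * l = a * (1 - l) by ring]
  field_simp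

noncomputable def regularizedLowerGamma (a x : ℝ) : ℝ :=
  (1 / Gamma a) * ∫ t in Ioc 0 x, t ^ (a - 1) * exp (-t)

theorem abs_regularizedLowerGamma_sub_le_of_twelve_le {a x : ℝ} (hx : 0 < x) (hxa : x < a)
    (ha : 12 ≤ a) :
    |regularizedLowerGamma a x -
        ((x / a) * exp (1 - x / a)) ^ a / (√(2 * π * a) * (1 - x / a))| ≤
      14 * ((x / a) * exp (1 - x / a)) ^ a / (√(2 * π * a) * (1 - x / a) ^ 3 * a) := by
  have ha0 : 0 < a := hx.trans hxa
  have hIB := abs_integral_rpow_mul_exp_neg_sub_le hx hxa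
  have hR := abs_exp_logStirling_div_Gamma_sub_one_le (by linarith : 6 ≤ a)
  have hG : 0 < Gamma a := Gamma_pos_of_pos ha0
  obtain ⟨l, rfl⟩ : ∃ l, x = a * l := ⟨x / a, by field_simp⟩
  have hl : 0 < l := pos_of_mul_pos_right hx ha0.le
  have hl1 : l < 1 := by nlinarith
  have hBG := rpow_mul_exp_neg_div_sub_div_Gamma ha0 hl.le hl1
  rw [regularizedLowerGamma, mul_div_cancel_left₀ l ha0.ne']
  set I := ∫ t in Ioc 0 (a * l), t ^ (a - 1) * exp (-t)
  set B := (a * l) ^ a * exp (-(a * l)) / (a - a * l)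
  set R := exp (logStirling a) / Gamma a
  set M := (l * exp (1 - l)) ^ a / (√(2 * π * a) * (1 - l))
  have hM : 0 ≤ M := by positivity
  have hR2 : R ≤ 2 := by
    have : 12 / a ≤ 1 := (div_le_one ha0).2 ha
    linarith [le_abs_self (R - 1)]
  calc |1 / Gamma a * I - M| = |(I - B) / Gamma a + (R - 1) * M| := by
        rw [sub_div, hBG]; ring_nf
    _ ≤ |I - B| / Gamma a + |R - 1| * M := by
        refine (abs_add_le _ _).trans_eq ?_
        rw [abs_div, abs_of_pos hG, abs_mul, abs_of_nonneg hM]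
    _ ≤ a * l / (a - a * l) ^ 2 * B / Gamma a + 12 / a * M := by gcongr
    _ = (R * l + 12 * (1 - l) ^ 2) * ((l * exp (1 - l)) ^ a / (√(2 * π * a) * (1 - l) ^ 3 * a)) := by
        rw [mul_div_assoc, hBG]
        have : 0 < 1 - l := by linarith
        simp only [M]
        field_simp
    _ ≤ 14 * (l * exp (1 - l)) ^ a / (√(2 * π * a) * (1 - l) ^ 3 * a) := by
        rw [mul_div_assoc]
        gcongr
        nlinarith [mul_le_mul_of_nonneg_right hR2 hl.le]

theorem abs_regularizedLowerGamma_sub_le_of_lt_twelve {a x : ℝ} (hx : 0 < x) (hxa : x < a)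
    (ha : a < 12) :
    |regularizedLowerGamma a x -
        ((x / a) * exp (1 - x / a)) ^ a / (√(2 * π * a) * (1 - x / a))| ≤
      132 * ((x / a) * exp (1 - x / a)) ^ a / (√(2 * π * a) * (1 - x / a) ^ 3 * a) := by
  have ha0 : 0 < a := hx.trans hxa
  have hG : 0 < Gamma a := Gamma_pos_of_pos ha0
  have hI := integral_rpow_mul_exp_neg_le_Gamma_mul hx hxa.le
  have hI0 : 0 ≤ ∫ t in Ioc 0 x, t ^ (a - 1) * exp (-t) :=
    setIntegral_nonneg measurableSet_Ioc fun t ht => by have := ht.1; positivity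
  rw [regularizedLowerGamma]
  set I := ∫ t in Ioc 0 x, t ^ (a - 1) * exp (-t)
  set T := ((x / a) * exp (1 - x / a)) ^ a
  set S := √(2 * π * a)
  set L := 1 - x / a
  have hL : 0 < L := by simp only [L]; rw [sub_pos, div_lt_one ha0]; exact hxa
  have hL1 : L ≤ 1 := by simp only [L]; linarith [div_pos hx ha0]
  have hS : S ≤ 10 := by
    rw [show (10 : ℝ) = √(10 ^ 2) by rw [sqrt_sq (by norm_num)]]
    exact sqrt_le_sqrt (by nlinarith [pi_le_four])
  have hS0 : 0 < S := by positivity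
  have hP : 1 / Gamma a * I ≤ T := by rw [one_div, inv_mul_le_iff₀ hG]; exact hI
  have hM : 0 ≤ T / (S * L) := by positivity
  calc |1 / Gamma a * I - T / (S * L)| ≤ T + T / (S * L) := by
        rw [abs_sub_le_iff]; constructor <;> nlinarith [one_div_nonneg.2 hG.le]
    _ = (S * L ^ 3 * a + L ^ 2 * a) * T / (S * L ^ 3 * a) := by field_simp
    _ ≤ (10 * 1 * 12 + 1 * 12) * T / (S * L ^ 3 * a) := by
        gcongr <;> exact pow_le_one₀ hL.le hL1
    _ = 132 * T / (S * L ^ 3 * a) := by norm_num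

/-- Uniform Temme-type estimate for the lower regularized incomplete gamma function:
with `λ = x/a`, `P(a,x) = ((λ e^{1-λ})^a/√(2πa)) (1/(1-λ) + O(1/((1-λ)³ a)))`
uniformly for `0 < x < a`. -/
theorem lower_incomplete_gamma_asymp :
    ∃ C : ℝ, ∀ a x : ℝ, 0 < x → x < a →
      |(1 / Real.Gamma a) * (∫ t in Ioc (0:ℝ) x, t ^ (a - 1) * Real.exp (-t)) -
          ((x / a) * Real.exp (1 - x / a)) ^ a / (Real.sqrt (2 * Real.pi * a) * (1 - x / a))| ≤
        C * ((x / a) * Real.exp (1 - x / a)) ^ a /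
          (Real.sqrt (2 * Real.pi * a) * (1 - x / a) ^ 3 * a) := by
  refine ⟨132, fun a x hx hxa => ?_⟩
  rcases lt_or_ge a 12 with ha | ha
  · exact abs_regularizedLowerGamma_sub_le_of_lt_twelve hx hxa ha
  · refine (abs_regularizedLowerGamma_sub_le_of_twelve_le hx hxa ha).trans ?_
    have hL : 0 < 1 - x / a := by rw [sub_pos, div_lt_one (hx.trans hxa)]; exact hxa
    have ha0 : 0 < a := hx.trans hxa
    gcongr
    norm_num
end

section
/- For fixed real n, the function (x, m) ↦ (1 − 1/x²)^m · ((x+1)/(x−1))^n is bounded on the set { (x, m) : x > 1, m ≥ n, m real }. -/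
/-- For fixed real `n`, `(1 - 1/x²)^m ((x+1)/(x-1))^n` is bounded over `x > 1`, `m ≥ n`. -/
theorem pow_ratio_bounded (n : ℝ) :
    ∃ C : ℝ, ∀ x m : ℝ, 1 < x → n ≤ m →
      (1 - 1 / x ^ 2) ^ m * ((x + 1) / (x - 1)) ^ n ≤ C := by
  refine ⟨max 1 ((4 : ℝ) ^ n), fun x m hx hm => ?_⟩
  have hx0 : (0 : ℝ) < x := lt_trans one_pos hx
  have hx2 : (1 : ℝ) < x ^ 2 := by nlinarith
  have ht : (0 : ℝ) < 1 - 1 / x ^ 2 := by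
    have : 1 / x ^ 2 < 1 := by
      rw [div_lt_one (by positivity)]; exact hx2
    linarith
  have ht1 : 1 - 1 / x ^ 2 ≤ 1 := by
    have : 0 < 1 / x ^ 2 := by positivity
    linarith
  have hr : (0 : ℝ) < (x + 1) / (x - 1) := by
    apply div_pos <;> linarith
  have step1 : (1 - 1 / x ^ 2) ^ m ≤ (1 - 1 / x ^ 2) ^ n :=
    Real.rpow_le_rpow_of_exponent_ge ht ht1 hm
  have step2 : (1 - 1 / x ^ 2) ^ m * ((x + 1) / (x - 1)) ^ n
      ≤ (1 - 1 / x ^ 2) ^ n * ((x + 1) / (x - 1)) ^ n :=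
    mul_le_mul_of_nonneg_right step1 (Real.rpow_nonneg hr.le n)
  have key : (1 - 1 / x ^ 2) ^ n * ((x + 1) / (x - 1)) ^ n
      = ((x + 1) ^ 2 / x ^ 2) ^ n := by
    rw [← Real.mul_rpow ht.le hr.le]
    congr 1
    have h1 : x - 1 ≠ 0 := by linarith
    have h2 : x ≠ 0 := by linarith
    field_simp
    ring
  have hb1 : (1 : ℝ) ≤ (x + 1) ^ 2 / x ^ 2 := by
    rw [le_div_iff₀ (by positivity)]
    nlinarith
  have hb4 : (x + 1) ^ 2 / x ^ 2 ≤ 4 := by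
    rw [div_le_iff₀ (by positivity)]
    nlinarith
  rcases le_or_gt 0 n with hn | hn
  · have : ((x + 1) ^ 2 / x ^ 2) ^ n ≤ (4 : ℝ) ^ n :=
      Real.rpow_le_rpow (by positivity) hb4 hn
    calc (1 - 1 / x ^ 2) ^ m * ((x + 1) / (x - 1)) ^ n
        ≤ ((x + 1) ^ 2 / x ^ 2) ^ n := by rw [← key]; exact step2
      _ ≤ (4 : ℝ) ^ n := this
      _ ≤ max 1 ((4 : ℝ) ^ n) := le_max_right _ _
  · have : ((x + 1) ^ 2 / x ^ 2) ^ n ≤ 1 :=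
      Real.rpow_le_one_of_one_le_of_nonpos hb1 hn.le
    calc (1 - 1 / x ^ 2) ^ m * ((x + 1) / (x - 1)) ^ n
        ≤ ((x + 1) ^ 2 / x ^ 2) ^ n := by rw [← key]; exact step2
      _ ≤ 1 := this
      _ ≤ max 1 ((4 : ℝ) ^ n) := le_max_left _ _
end

section
/- Fix λ ∈ ℝ and set ℓ = −1/2 + iλ. Then for every m₀ > 0 there is a constant C such that |Γ(m)/Γ(m+ℓ+1) − m^{−ℓ−1}(1 + (1/4 + λ²)/(2m))| ≤ C |m^{−ℓ−1}|/m² for all real m ≥ m₀. -/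
/-!
Write `s = ℓ + 1 = 1/2 + iλ`, so that `s (1 - s) = 1/4 + λ²`, and let
`G(y) = Γ(y) y^s / (Γ(y + s) (1 + s(1-s)/(2y)))`. The functional equation of `Γ` gives
`G(y + 1) = G(y) P(1/y)`, where `P` is an explicit function with `P(z) = 1 + O(z³)` at `0`: the
correction factor is chosen to kill the `z²` term of the binomial series of `(1 + z)^s / (1 + s z)`.
Euler's limit formula gives `G(y + n) → 1` as `n → ∞`, so telescoping along `y, y + 1, y + 2, …`
yields `G(y) = 1 + O(∑ₖ (y + k)⁻³) = 1 + O(y⁻²)`. On the compact range `[m₀, M]` everything is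
continuous, since `1/Γ` is entire.
-/

open Complex Filter Asymptotics Topology

theorem norm_sub_one_le_of_tendsto_of_mul_succ {R : Type*} [NormedCommRing R] [NormOneClass R]
    {a p : ℕ → R} {S : ℝ} (ha : Tendsto a atTop (𝓝 1)) (hstep : ∀ n, a (n + 1) = a n * p n)
    (hS : ∀ N, ∑ k ∈ Finset.range N, ‖p k - 1‖ ≤ S) (hS₁ : S ≤ 1 / 4) :
    ‖a 0 - 1‖ ≤ 4 * S := by
  have hS₀ : 0 ≤ S := by simpa using hS 0
  have hprod : ∀ n, a n = a 0 * ∏ k ∈ Finset.range n, p k := by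
    intro n
    induction n with
    | zero => simp
    | succ n ih => rw [hstep, ih, Finset.prod_range_succ, mul_assoc]
  have hexp : Real.exp S - 1 ≤ 2 * S := by
    have := Real.abs_exp_sub_one_le (x := S) (by rw [abs_of_nonneg hS₀]; linarith)
    rw [abs_of_nonneg hS₀] at this
    exact (le_abs_self _).trans this
  have hdist : ∀ n, ‖a 0 - a n‖ ≤ ‖a 0‖ * (2 * S) := fun n =>
    calc ‖a 0 - a n‖ = ‖a 0 * (∏ k ∈ Finset.range n, (1 + (p k - 1)) - 1)‖ := by
          rw [hprod n, norm_sub_rev]; simp [mul_sub]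
      _ ≤ ‖a 0‖ * (Real.exp (∑ k ∈ Finset.range n, ‖p k - 1‖) - 1) :=
          (norm_mul_le _ _).trans (by gcongr; exact Finset.norm_prod_one_add_sub_one_le _ _)
      _ ≤ ‖a 0‖ * (2 * S) := by
          gcongr
          exact (sub_le_sub_right (Real.exp_le_exp.2 (hS n)) 1).trans hexp
  have hlim : ‖a 0 - 1‖ ≤ ‖a 0‖ * (2 * S) :=
    le_of_tendsto ((tendsto_const_nhds.sub ha).norm) (Eventually.of_forall hdist)
  have hbound : ‖a 0‖ ≤ 2 := by
    have := norm_le_norm_sub_add (a 0) 1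
    rw [norm_one] at this
    nlinarith [norm_nonneg (a 0)]
  nlinarith [norm_nonneg (a 0)]

theorem sum_range_one_div_add_pow_three_le {y : ℝ} (hy : 1 ≤ y) (N : ℕ) :
    ∑ k ∈ Finset.range N, 1 / (y + k) ^ 3 ≤ 2 / y ^ 2 := by
  -- `1 / x³ ≤ x / (x² - 1/4)² = f k - f (k + 1)` for `x = y + k`
  set f : ℕ → ℝ := fun k => 1 / (2 * (y + k - 1 / 2) ^ 2)
  have hstep : ∀ k : ℕ, 1 / (y + k) ^ 3 ≤ f k - f (k + 1) := by
    intro k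
    have hk : (0 : ℝ) ≤ k := k.cast_nonneg
    have h₁ : 0 < y + k - 1 / 2 := by linarith
    have h₂ : 0 < y + (k + 1) - 1 / 2 := by linarith
    have hx : 0 < y + k := by linarith
    simp only [f, Nat.cast_add, Nat.cast_one]
    rw [div_sub_div _ _ (by positivity) (by positivity),
      div_le_div_iff₀ (by positivity) (by positivity)]
    nlinarith [mul_pos (mul_pos h₁ h₂) hx, pow_pos hx 4, sq_nonneg (y + k)]
  calc ∑ k ∈ Finset.range N, 1 / (y + k) ^ 3 ≤ ∑ k ∈ Finset.range N, (f k - f (k + 1)) :=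
        Finset.sum_le_sum fun k _ => hstep k
    _ = f 0 - f N := Finset.sum_range_sub' f N
    _ ≤ f 0 := sub_le_self _ (by positivity)
    _ ≤ 2 / y ^ 2 := by
        simp only [f, Nat.cast_zero, add_zero]
        rw [div_le_div_iff₀ (by nlinarith) (by positivity)]
        nlinarith

theorem isBigO_sub_one_of_add_one_eq_mul {R : Type*} [NormedCommRing R] [NormOneClass R]
    {G p : ℝ → R} (hstep : ∀ᶠ y in atTop, G (y + 1) = G y * p y)
    (hp : (fun y => p y - 1) =O[atTop] fun y => 1 / y ^ 3)
    (hlim : ∀ᶠ y in atTop, Tendsto (fun n : ℕ => G (y + n)) atTop (𝓝 1)) :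
    (fun y => G y - 1) =O[atTop] fun y => 1 / y ^ 2 := by
  obtain ⟨K, hK₀, hK⟩ := hp.exists_nonneg
  obtain ⟨M, hM⟩ := eventually_atTop.1 (hstep.and (hK.bound.and (eventually_ge_atTop 1)))
  have hsmall : ∀ᶠ y : ℝ in atTop, K * (2 / y ^ 2) ≤ 1 / 4 := by
    have : Tendsto (fun y : ℝ => K * (2 / y ^ 2)) atTop (𝓝 0) := by
      simpa using (tendsto_const_nhds.div_atTop (tendsto_pow_atTop two_ne_zero)).const_mul K
    exact this.eventually_le_const (by norm_num)
  refine IsBigO.of_bound (8 * K) ?_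
  filter_upwards [eventually_ge_atTop M, hsmall, hlim] with y hyM hsmall hlimy
  have hyn : ∀ n : ℕ, M ≤ y + n := fun n => by linarith [n.cast_nonneg (α := ℝ)]
  have hsum : ∀ N, ∑ k ∈ Finset.range N, ‖p (y + k) - 1‖ ≤ K * (2 / y ^ 2) := fun N =>
    calc ∑ k ∈ Finset.range N, ‖p (y + k) - 1‖
        ≤ ∑ k ∈ Finset.range N, K * (1 / (y + k) ^ 3) := by
          refine Finset.sum_le_sum fun k _ => ?_
          have hk := (hM _ (hyn k)).2
          simpa [abs_of_nonneg (show 0 ≤ y + k by linarith [hk.2])] using hk.1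
      _ ≤ K * (2 / y ^ 2) := by
          rw [← Finset.mul_sum]
          exact mul_le_mul_of_nonneg_left
            (sum_range_one_div_add_pow_three_le (hM y hyM).2.2 N) hK₀
  have hG := norm_sub_one_le_of_tendsto_of_mul_succ hlimy (fun n => ?_) hsum hsmall
  · calc ‖G y - 1‖ ≤ 4 * (K * (2 / y ^ 2)) := by simpa using hG
      _ = 8 * K * ‖1 / y ^ 2‖ := by
          rw [Real.norm_of_nonneg (by positivity)]
          ring
  · rw [Nat.cast_succ, ← add_assoc]
    exact (hM _ (hyn n)).1

theorem isBigO_principal_Ici_of_isBigO_atTop {E F : Type*} [NormedAddCommGroup E]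
    [NormedAddCommGroup F] {f : ℝ → E} {g : ℝ → F} {a : ℝ} (hf : ContinuousOn f (Set.Ici a))
    (hg : ContinuousOn g (Set.Ici a)) (hg₀ : ∀ x ∈ Set.Ici a, g x ≠ 0) (h : f =O[atTop] g) :
    f =O[𝓟 (Set.Ici a)] g := by
  obtain ⟨c, hc⟩ := h.bound
  obtain ⟨M, hM⟩ := eventually_atTop.1 hc
  have hcompact : f =O[𝓟 (Set.Icc a M)] g :=
    ((hf.mono Set.Icc_subset_Ici_self).isBigO_principal isCompact_Icc (c := (1 : ℝ))
      (by simp)).trans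
      ((hg.mono Set.Icc_subset_Ici_self).isBigO_rev_principal isCompact_Icc
        (fun x hx => hg₀ x hx.1) (1 : ℝ))
  have htail : f =O[𝓟 (Set.Ici M)] g := isBigO_principal.2 ⟨c, hM⟩
  refine (hcompact.sup htail).mono ?_
  rw [sup_principal, principal_mono]
  intro x hx
  by_cases hxM : x ≤ M
  exacts [Or.inl ⟨hx, hxM⟩, Or.inr (le_of_not_ge hxM)]

namespace Complex

theorem binomialSeries_partialSum_three (s z : ℂ) :
    (binomialSeries ℂ s).partialSum 3 z = 1 + s * z + s * (s - 1) / 2 * z ^ 2 := by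
  simp only [FormalMultilinearSeries.partialSum, Finset.sum_range_succ, binomialSeries_apply]
  simp [Ring.choose_eq_smul, descPochhammer_succ_right, Polynomial.smeval_mul,
    Polynomial.smeval_sub, Polynomial.smeval_X]
  ring

theorem one_add_cpow_sub_isBigO (s : ℂ) :
    (fun z : ℂ => (1 + z) ^ s - (1 + s * z + s * (s - 1) / 2 * z ^ 2)) =O[𝓝 0]
      fun z => z ^ 3 := by
  have h := (one_add_cpow_hasFPowerSeriesAt_zero (a := s)).isBigO_sub_partialSum_pow 3
  simp only [zero_add, binomialSeries_partialSum_three, ← norm_pow] at h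
  exact isBigO_norm_right.mp h

theorem tendsto_ofReal_inv_atTop : Tendsto (fun y : ℝ => (y : ℂ)⁻¹) atTop (𝓝 0) := by
  simpa [Function.comp_def] using (continuous_ofReal.tendsto 0).comp tendsto_inv_atTop_zero

theorem ne_neg_natCast_of_re_pos {z : ℂ} (hz : 0 < z.re) (m : ℕ) : z ≠ -m := by
  rintro rfl
  simp only [neg_re, natCast_re, Left.neg_pos_iff] at hz
  exact hz.not_ge m.cast_nonneg

theorem Gamma_add_nat_add_one {z : ℂ} (hz : ∀ m : ℕ, z ≠ -m) (n : ℕ) :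
    Gamma (z + n + 1) = Gamma z * ∏ j ∈ Finset.range (n + 1), (z + j) := by
  induction n with
  | zero => simpa [mul_comm] using Gamma_add_one z (by simpa using hz 0)
  | succ n ih =>
    have hne : z + n + 1 ≠ 0 := by
      simpa [add_assoc, ← eq_neg_iff_add_eq_zero] using hz (n + 1)
    rw [Nat.cast_succ, ← add_assoc, Gamma_add_one _ hne, ih, Finset.prod_range_succ (n := n + 1)]
    push_cast
    ring

theorem tendsto_Gamma_add_nat_add_one_div {z : ℂ} (hz : ∀ m : ℕ, z ≠ -m) :
    Tendsto (fun n : ℕ => Gamma (z + n + 1) / ((n : ℂ) ^ z * n.factorial)) atTop (𝓝 1) := by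
  have hΓ := Gamma_ne_zero hz
  have h := (tendsto_const_nhds (x := Gamma z)).div (GammaSeq_tendsto_Gamma z) hΓ
  rw [div_self hΓ] at h
  refine h.congr' ?_
  filter_upwards [eventually_ne_atTop 0] with n hn
  have hprod : ∏ j ∈ Finset.range (n + 1), (z + j) ≠ 0 :=
    Finset.prod_ne_zero_iff.2 fun j _ h => hz j (eq_neg_of_add_eq_zero_left h)
  have hpow : (n : ℂ) ^ z ≠ 0 := by simp [hn]
  simp only [Pi.div_apply, GammaSeq, Gamma_add_nat_add_one hz]
  field_simp

end Complex

noncomputable def gammaRatio (s : ℂ) (y : ℝ) : ℂ := Gamma y * (y : ℂ) ^ s / Gamma (y + s)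

noncomputable def gammaRatioApprox (s : ℂ) (y : ℝ) : ℂ := 1 + s * (1 - s) / (2 * y)

/-- At `z = 1/y` this is the ratio of `gammaRatio s / gammaRatioApprox s` at `y + 1` and at `y`. -/
noncomputable def gammaStep (s z : ℂ) : ℂ :=
  (1 + z) ^ s * ((2 + s * (1 - s) * z) * (1 + z)) / ((1 + s * z) * (2 + (2 + s * (1 - s)) * z))

theorem gammaStep_sub_one_isBigO (s : ℂ) :
    (fun z => gammaStep s z - 1) =O[𝓝 0] fun z => z ^ 3 := by
  set c := s * (1 - s)
  set D : ℂ → ℂ := fun z => (1 + s * z) * (2 + (2 + c) * z)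
  have hD : Tendsto D (𝓝 0) (𝓝 2) := by
    have : Continuous D := by fun_prop
    simpa [D] using this.tendsto 0
  -- Since `c = s (1 - s)`, the numerator of `gammaStep s z - 1` with `(1 + z) ^ s` replaced by
  -- its quadratic Taylor polynomial is divisible by `z³`.
  have hnum : (fun z : ℂ => (1 + z) ^ s * ((2 + c * z) * (1 + z)) - D z) =O[𝓝 0]
      fun z => z ^ 3 := by
    have hpoly : (fun z : ℂ => z ^ 3 * (s * c - c - c ^ 2 / 2 - c ^ 2 / 2 * z)) =O[𝓝 0]
        fun z => z ^ 3 * 1 :=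
      (isBigO_refl (fun z : ℂ => z ^ 3) _).mul
        (((continuous_const.sub (continuous_const.mul continuous_id)).tendsto (0 : ℂ)).isBigO_one ℂ)
    have hrest := (one_add_cpow_sub_isBigO s).mul
      (((show Continuous fun z : ℂ => (2 + c * z) * (1 + z) by fun_prop).tendsto 0).isBigO_one ℂ)
    refine ((hrest.add hpoly).congr (fun z => ?_) (fun z => by ring)).trans (isBigO_refl _ _)
    simp only [D, c]
    ring
  refine ((hnum.mul ((hD.inv₀ two_ne_zero).isBigO_one ℂ)).congr' ?_ (by simp)).trans
    (isBigO_refl _ _)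
  filter_upwards [hD.eventually_ne two_ne_zero] with z hz
  simp only [gammaStep, D, c] at hz ⊢
  rw [div_sub_one hz, div_eq_mul_inv]

theorem tendsto_gammaRatio_add_nat {s : ℂ} {x : ℝ} (hx : 0 < x) (hxs : 0 < x + s.re) :
    Tendsto (fun n : ℕ => gammaRatio s (x + n)) atTop (𝓝 1) := by
  have hx' : ∀ m : ℕ, (x : ℂ) ≠ -m := ne_neg_natCast_of_re_pos (by simpa)
  have hxs' : ∀ m : ℕ, (x : ℂ) + s ≠ -m := ne_neg_natCast_of_re_pos (by simpa)
  have hquot : Tendsto (fun n : ℕ => (((x + n + 1) / n : ℝ) : ℂ) ^ s) atTop (𝓝 1) := by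
    have h : Tendsto (fun n : ℕ => 1 + (x + 1) / (n : ℝ)) atTop (𝓝 1) := by
      simpa using (tendsto_const_div_atTop_nhds_zero_nat (x + 1)).const_add 1
    have h' : Tendsto (fun n : ℕ => (x + n + 1) / (n : ℝ)) atTop (𝓝 1) := by
      refine h.congr' ?_
      filter_upwards [eventually_ne_atTop 0] with n hn
      field_simp
      ring
    simpa only [Function.comp_def, ofReal_one, one_cpow] using
      (continuousAt_cpow_const (b := s) one_mem_slitPlane).tendsto.comp
        ((continuous_ofReal.tendsto 1).comp h')
  rw [← tendsto_add_atTop_iff_nat 1]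
  have h := ((tendsto_Gamma_add_nat_add_one_div hx').div
    (tendsto_Gamma_add_nat_add_one_div hxs') one_ne_zero).mul hquot
  rw [div_one, mul_one] at h
  refine h.congr' ?_
  filter_upwards [eventually_ne_atTop 0] with n hn
  have hn' : (n : ℂ) ≠ 0 := Nat.cast_ne_zero.2 hn
  have hΓ : Gamma ((x : ℂ) + n + 1 + s) ≠ 0 := by
    refine Gamma_ne_zero_of_re_pos ?_
    simp only [add_re, ofReal_re, natCast_re, one_re]
    linarith [n.cast_nonneg (α := ℝ)]
  simp only [Pi.div_apply]
  rw [ofReal_div, div_cpow_ofReal_nonneg (by positivity) n.cast_nonneg, ofReal_natCast,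
    cpow_add _ _ hn', gammaRatio]
  push_cast
  rw [show (x : ℂ) + s + n + 1 = x + n + 1 + s by ring, ← add_assoc]
  have hnx : (n : ℂ) ^ (x : ℂ) ≠ 0 := by simp [hn]
  have hns : (n : ℂ) ^ s ≠ 0 := by simp [hn]
  have hfac : (n.factorial : ℂ) ≠ 0 := Nat.cast_ne_zero.2 n.factorial_ne_zero
  field_simp

theorem gammaRatio_add_one {s : ℂ} {y : ℝ} (hy : 0 < y) (hys : 0 < y + s.re) :
    gammaRatio s (y + 1) = gammaRatio s y * ((1 + (y : ℂ)⁻¹) ^ s / (1 + s * (y : ℂ)⁻¹)) := by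
  have hy' : (y : ℂ) ≠ 0 := ofReal_ne_zero.2 hy.ne'
  have hys' : (y : ℂ) + s ≠ 0 := ne_of_apply_ne re (by simpa using hys.ne')
  have hcpow : ((y : ℂ) + 1) ^ s = (y : ℂ) ^ s * (1 + (y : ℂ)⁻¹) ^ s := by
    have := mul_cpow_ofReal_nonneg hy.le (by positivity : 0 ≤ 1 + y⁻¹) s
    push_cast at this
    rw [← this, mul_add, mul_inv_cancel₀ hy', mul_one]
  have hΓ : Gamma ((y : ℂ) + s) ≠ 0 := Gamma_ne_zero_of_re_pos (by simpa)
  have hsy : 1 + s * (y : ℂ)⁻¹ ≠ 0 := by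
    rw [show 1 + s * (y : ℂ)⁻¹ = (y + s) / y by field_simp]
    exact div_ne_zero hys' hy'
  simp only [gammaRatio]
  push_cast
  rw [Gamma_add_one _ hy', show (y : ℂ) + 1 + s = y + s + 1 by ring, Gamma_add_one _ hys', hcpow]
  field_simp

theorem gammaRatio_div_approx_add_one {s : ℂ} {y : ℝ} (hy : 0 < y) (hys : 0 < y + s.re)
    (h₀ : gammaRatioApprox s y ≠ 0) (h₁ : gammaRatioApprox s (y + 1) ≠ 0) :
    gammaRatio s (y + 1) / gammaRatioApprox s (y + 1) =
      gammaRatio s y / gammaRatioApprox s y * gammaStep s (y : ℂ)⁻¹ := by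
  have hy' : (y : ℂ) ≠ 0 := ofReal_ne_zero.2 hy.ne'
  have hy₁ : (y : ℂ) + 1 ≠ 0 := ne_of_apply_ne re (by simp; linarith)
  have e₀ : gammaRatioApprox s y = (2 * y + s * (1 - s)) / (2 * y) := by
    simp only [gammaRatioApprox]; field_simp
  have e₁ : gammaRatioApprox s (y + 1) = (2 * (y + 1) + s * (1 - s)) / (2 * (y + 1)) := by
    simp only [gammaRatioApprox]; push_cast; field_simp
  have e₂ : gammaStep s (y : ℂ)⁻¹ = (1 + (y : ℂ)⁻¹) ^ s *
      ((2 * y + s * (1 - s)) * (y + 1) / ((y + s) * (2 * (y + 1) + s * (1 - s)))) := by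
    have hnum : (2 + s * (1 - s) * (y : ℂ)⁻¹) * (1 + (y : ℂ)⁻¹) =
        (2 * y + s * (1 - s)) * (y + 1) / y ^ 2 := by
      field_simp
    have hden : (1 + s * (y : ℂ)⁻¹) * (2 + (2 + s * (1 - s)) * (y : ℂ)⁻¹) =
        (y + s) * (2 * (y + 1) + s * (1 - s)) / y ^ 2 := by
      field_simp
      ring
    rw [gammaStep, hnum, hden, mul_div_assoc, div_div_div_cancel_right₀ (pow_ne_zero 2 hy')]
  rw [e₀] at h₀ ⊢
  rw [e₁] at h₁ ⊢
  have h₀' : (y : ℂ) * 2 + s * (1 - s) ≠ 0 := by rw [mul_comm]; exact left_ne_zero_of_mul h₀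
  have h₁' := left_ne_zero_of_mul h₁
  rw [gammaRatio_add_one hy hys, e₂]
  generalize (1 + (y : ℂ)⁻¹) ^ s = A
  field_simp

theorem tendsto_gammaRatioApprox (s : ℂ) : Tendsto (gammaRatioApprox s) atTop (𝓝 1) := by
  have h := (tendsto_ofReal_inv_atTop.const_mul (s * (1 - s) / 2)).const_add 1
  rw [mul_zero, add_zero] at h
  refine h.congr fun y => ?_
  simp only [gammaRatioApprox]
  ring

theorem gammaRatio_div_approx_sub_one_isBigO (s : ℂ) :
    (fun y => gammaRatio s y / gammaRatioApprox s y - 1) =O[atTop] fun y => 1 / y ^ 2 := by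
  have happrox := tendsto_gammaRatioApprox s
  have hne : ∀ᶠ y in atTop, gammaRatioApprox s y ≠ 0 := happrox.eventually_ne one_ne_zero
  have hpos : ∀ᶠ y : ℝ in atTop, 0 < y ∧ 0 < y + s.re :=
    (eventually_gt_atTop 0).and ((eventually_gt_atTop (-s.re)).mono fun y hy => by linarith)
  refine isBigO_sub_one_of_add_one_eq_mul (p := fun y => gammaStep s (y : ℂ)⁻¹) ?_ ?_ ?_
  · filter_upwards [hpos, hne, (tendsto_atTop_add_const_right _ 1 tendsto_id).eventually hne]
      with y hy h₀ h₁
    exact gammaRatio_div_approx_add_one hy.1 hy.2 h₀ h₁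
  · refine ((gammaStep_sub_one_isBigO s).comp_tendsto tendsto_ofReal_inv_atTop).trans
      (isBigO_of_le _ fun y => ?_)
    simp
  · filter_upwards [hpos] with y hy
    have h := (tendsto_gammaRatio_add_nat hy.1 hy.2).div
      (happrox.comp (tendsto_atTop_add_const_left _ y tendsto_natCast_atTop_atTop)) one_ne_zero
    rwa [div_one] at h

theorem Gamma_div_Gamma_add_eq_cpow_neg_mul {s : ℂ} {y : ℝ} (hy : 0 < y) :
    Gamma y / Gamma (y + s) = (y : ℂ) ^ (-s) * gammaRatio s y := by
  have hys : (y : ℂ) ^ s ≠ 0 := by simp [hy.ne']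
  rw [gammaRatio, cpow_neg]
  field_simp

theorem isBigO_Gamma_div_Gamma_add_sub (s : ℂ) :
    (fun y : ℝ => Gamma y / Gamma (y + s) - (y : ℂ) ^ (-s) * gammaRatioApprox s y) =O[atTop]
      fun y => (y : ℂ) ^ (-s) / (y : ℂ) ^ 2 := by
  have hG : (fun y => gammaRatio s y / gammaRatioApprox s y - 1) =O[atTop]
      fun y : ℝ => ((y : ℂ) ^ 2)⁻¹ :=
    (gammaRatio_div_approx_sub_one_isBigO s).trans (isBigO_of_le _ fun y => by simp)
  have hA : (fun y : ℝ => (y : ℂ) ^ (-s) * gammaRatioApprox s y) =O[atTop]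
      fun y => (y : ℂ) ^ (-s) :=
    ((isBigO_refl _ _).mul ((tendsto_gammaRatioApprox s).isBigO_one ℂ)).congr_right
      fun y => mul_one _
  refine (hA.mul hG).congr' ?_ (Eventually.of_forall fun y => (div_eq_mul_inv _ _).symm)
  filter_upwards [eventually_gt_atTop 0, (tendsto_gammaRatioApprox s).eventually_ne one_ne_zero]
    with y hy hne
  rw [Gamma_div_Gamma_add_eq_cpow_neg_mul hy]
  field_simp

theorem continuousOn_Gamma_div_Gamma_add_sub (s : ℂ) :
    ContinuousOn (fun y : ℝ => Gamma y / Gamma (y + s) - (y : ℂ) ^ (-s) * gammaRatioApprox s y)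
      (Set.Ioi 0) := by
  intro y hy
  have hy' : (y : ℂ) ≠ 0 := ofReal_ne_zero.2 (ne_of_gt hy)
  refine ContinuousAt.continuousWithinAt ?_
  have hΓ : ContinuousAt (fun y : ℝ => Gamma y) y :=
    (differentiableAt_Gamma _ (ne_neg_natCast_of_re_pos (by simpa using hy))).continuousAt.comp
      continuous_ofReal.continuousAt
  have hΓinv : ContinuousAt (fun y : ℝ => (Gamma (y + s))⁻¹) y :=
    (differentiable_one_div_Gamma.continuous.comp
      (continuous_ofReal.add continuous_const)).continuousAt
  have hpow : ContinuousAt (fun y : ℝ => (y : ℂ) ^ (-s)) y :=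
    continuousAt_ofReal_cpow_const _ _ (Or.inr (ne_of_gt hy))
  have happrox : ContinuousAt (gammaRatioApprox s) y := by
    unfold gammaRatioApprox; fun_prop (disch := simpa using hy')
  simp only [div_eq_mul_inv]
  exact (hΓ.mul hΓinv).sub (hpow.mul happrox)

theorem exists_norm_Gamma_div_Gamma_add_sub_le (s : ℂ) {m₀ : ℝ} (hm₀ : 0 < m₀) :
    ∃ C : ℝ, ∀ m : ℝ, m₀ ≤ m →
      ‖Gamma m / Gamma (m + s) - (m : ℂ) ^ (-s) * gammaRatioApprox s m‖ ≤
        C * ‖(m : ℂ) ^ (-s)‖ / m ^ 2 := by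
  have hIci : Set.Ici m₀ ⊆ Set.Ioi 0 := Set.Ici_subset_Ioi.2 hm₀
  have hg : ContinuousOn (fun y : ℝ => (y : ℂ) ^ (-s) / (y : ℂ) ^ 2) (Set.Ici m₀) := by
    intro y hy
    have hy' : (y : ℂ) ≠ 0 := ofReal_ne_zero.2 (ne_of_gt (hIci hy))
    exact ((continuousAt_ofReal_cpow_const _ _ (Or.inr (ne_of_gt (hIci hy)))).div
      (continuous_ofReal.continuousAt.pow 2) (pow_ne_zero 2 hy')).continuousWithinAt
  have hg₀ : ∀ y ∈ Set.Ici m₀, (y : ℂ) ^ (-s) / (y : ℂ) ^ 2 ≠ 0 := fun y hy => by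
    have hy' : y ≠ 0 := ne_of_gt (hIci hy)
    simp [hy']
  obtain ⟨C, hC⟩ := isBigO_principal.1 (isBigO_principal_Ici_of_isBigO_atTop
    ((continuousOn_Gamma_div_Gamma_add_sub s).mono hIci) hg hg₀ (isBigO_Gamma_div_Gamma_add_sub s))
  refine ⟨C, fun m hm => (hC m hm).trans_eq ?_⟩
  rw [norm_div, norm_pow, norm_real, Real.norm_of_nonneg (hm₀.le.trans hm), mul_div_assoc]

/-- Two-term asymptotic expansion of the Gamma ratio with complex shift
`ℓ + 1 = 1/2 + iλ`: for `ℓ = -1/2 + iλ`,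
`Γ(m)/Γ(m+ℓ+1) = m^{-ℓ-1} (1 + (1/4+λ²)/(2m)) + O(|m^{-ℓ-1}|/m²)` for `m ≥ m₀`. -/
theorem gamma_ratio_expansion (lam : ℝ) (m₀ : ℝ) (hm₀ : 0 < m₀) :
    ∃ C : ℝ, ∀ m : ℝ, m₀ ≤ m →
      ‖Complex.Gamma (m : ℂ) / Complex.Gamma ((m : ℂ) + (-1/2 + I * lam) + 1) -
          (m : ℂ) ^ (-(-1/2 + I * lam) - 1) *
            (1 + ((1/4 + (lam : ℂ) ^ 2)) / (2 * m))‖ ≤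
        C * ‖(m : ℂ) ^ (-(-1/2 + I * lam) - 1)‖ / m ^ 2 := by
  set s : ℂ := 1 / 2 + I * lam
  have hshift : ∀ m : ℂ, m + (-1/2 + I * lam) + 1 = m + s := fun m => by ring
  have hexp : -(-1/2 + I * lam) - 1 = -s := by ring
  have hcoeff : 1/4 + (lam : ℂ) ^ 2 = s * (1 - s) := by
    simp only [s]
    linear_combination (lam : ℂ) ^ 2 * I_sq
  simp only [hshift, hexp, hcoeff]
  exact exists_norm_Gamma_div_Gamma_add_sub_le s hm₀
end
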